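/- arXiv:math/0006006 — 2 statements merged into one kernel-verified Lean document; each statement's English description precedes it below -/
import Mathlib

section
/- For a nonempty subset I ⊆ {1,...,N}, define Φ(I) := {j−1 : j ∈ I, j ≥ 2} ∪ {N : if 1 ∈ I}. Then for any composition η ∈ ℕ^N, Φ(I) is maximal with respect to Φη := (η_2,...,η_N,η_1+1) if and only if I is maximal with respect to η, where 'I = {t_1<...<t_s} maximal with respect to η' means η_j ≠ η_{t_u} for t_{u−1} < j < t_u (u = 1,...,s, t_0 := 0) and η_j ≠ η_{t_1}+1 for t_s < j ≤ N. -/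
/-- The raising operation on compositions: `Φη = (η_2, …, η_N, η_1 + 1)`. -/
def PhiComp {N : ℕ} (η : Fin N → ℕ) : Fin N → ℕ := fun i =>
  if h : (i : ℕ) + 1 < N then η ⟨(i : ℕ) + 1, h⟩ else η ⟨0, i.pos⟩ + 1

/-- The operation `Φ` on index sets (1-indexed: `Φ(I) = {j−1 : j ∈ I, j ≥ 2} ∪ {N if 1 ∈ I}`;
here written 0-indexed on `Fin N`). -/
def PhiSet {N : ℕ} (hN : 0 < N) (I : Finset (Fin N)) : Finset (Fin N) :=
  ((I.filter fun j : Fin N => (j : ℕ) ≠ 0).image fun j : Fin N =>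
      (⟨(j : ℕ) - 1, lt_of_le_of_lt (Nat.sub_le _ _) j.isLt⟩ : Fin N)) ∪
    (if (⟨0, hN⟩ : Fin N) ∈ I then {(⟨N - 1, Nat.sub_lt hN one_pos⟩ : Fin N)} else ∅)

/-- `I` is maximal with respect to `η`. -/
def MaximalWrt {N : ℕ} (η : Fin N → ℕ) (I : Finset (Fin N)) : Prop :=
  I.Nonempty ∧ ∀ j : Fin N, j ∉ I →
    if h : (I.filter fun t => j < t).Nonempty
    then η j ≠ η ((I.filter fun t => j < t).min' h)
    else ∀ hI : I.Nonempty, η j ≠ η (I.min' hI) + 1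

/-!
Extend `η` to `ℕ` by `η (n + N) = η n + 1` and `I` periodically. For `j ∉ I`, the value that
`MaximalWrt` compares `η j` with is then the extension of `η` at the first index after `j` lying
in the extension of `I`; the `+ 1` of the wrap-around case is exactly the periodicity shift. In
these terms `Φ` is the shift `n ↦ n + 1` of both extensions, and the resulting condition at `n`
only depends on `n mod N`, so it is invariant under the shift.
-/

-- `(n : Fin N)` for `n : ℕ` is the residue `n % N`.
open Fin.NatCast

section PeriodicExtension

variable {N : ℕ} [NeZero N]

lemma natCast_add_mul_self (n k : ℕ) : ((n + N * k : ℕ) : Fin N) = n := by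
  simp

def periodicLift (η : Fin N → ℕ) (n : ℕ) : ℕ := η n + n / N

lemma periodicLift_val (η : Fin N → ℕ) (j : Fin N) : periodicLift η j = η j := by
  simp [periodicLift, Nat.div_eq_of_lt j.isLt]

lemma periodicLift_add_mul (η : Fin N → ℕ) (n k : ℕ) :
    periodicLift η (n + N * k) = periodicLift η n + k := by
  rw [periodicLift, periodicLift, natCast_add_mul_self, Nat.add_mul_div_left _ _ (NeZero.pos N),
    add_assoc]

lemma periodicLift_add_self (η : Fin N → ℕ) (n : ℕ) :
    periodicLift η (n + N) = periodicLift η n + 1 := by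
  simpa using periodicLift_add_mul η n 1

def IsNextIndex (I : Finset (Fin N)) (n m : ℕ) : Prop :=
  n < m ∧ (m : Fin N) ∈ I ∧ ∀ k, n < k → k < m → (k : Fin N) ∉ I

-- `0` when `I = ∅`.
noncomputable def nextIndex (I : Finset (Fin N)) (n : ℕ) : ℕ :=
  sInf {m | n < m ∧ (m : Fin N) ∈ I}

variable {I : Finset (Fin N)} {n m : ℕ}

lemma IsNextIndex.nextIndex_eq (h : IsNextIndex I n m) : nextIndex I n = m :=
  le_antisymm (Nat.sInf_le ⟨h.1, h.2.1⟩) <| le_csInf ⟨m, h.1, h.2.1⟩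
    fun k ⟨hnk, hk⟩ => not_lt.1 fun hkm => h.2.2 k hnk hkm hk

lemma isNextIndex_nextIndex (hI : I.Nonempty) (n : ℕ) : IsNextIndex I n (nextIndex I n) := by
  obtain ⟨i, hi⟩ := hI
  have hne : {m | n < m ∧ (m : Fin N) ∈ I}.Nonempty :=
    ⟨i + N * (n + 1), by nlinarith [NeZero.pos N],
      by rwa [natCast_add_mul_self, Fin.cast_val_eq_self]⟩
  obtain ⟨hlt, hmem⟩ := Nat.sInf_mem hne
  exact ⟨hlt, hmem, fun k hnk hk hkI => Nat.notMem_of_lt_sInf hk ⟨hnk, hkI⟩⟩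

lemma IsNextIndex.add_mul (h : IsNextIndex I n m) (k : ℕ) :
    IsNextIndex I (n + N * k) (m + N * k) := by
  obtain ⟨hnm, hm, hgap⟩ := h
  refine ⟨by omega, by rwa [natCast_add_mul_self], fun l hnl hlm => ?_⟩
  obtain ⟨l, rfl⟩ : ∃ l', l = l' + N * k := ⟨l - N * k, by omega⟩
  rw [natCast_add_mul_self]
  exact hgap l (by omega) (by omega)

lemma nextIndex_add_mul (hI : I.Nonempty) (n k : ℕ) :
    nextIndex I (n + N * k) = nextIndex I n + N * k :=
  ((isNextIndex_nextIndex hI n).add_mul k).nextIndex_eq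

lemma periodicLift_eq_periodicLift_nextIndex_iff (η : Fin N → ℕ) (hI : I.Nonempty) (n : ℕ) :
    periodicLift η n = periodicLift η (nextIndex I n) ↔
      η n = periodicLift η (nextIndex I ((n : Fin N) : ℕ)) := by
  conv_lhs => rw [← Nat.mod_add_div n N, nextIndex_add_mul hI, periodicLift_add_mul,
    periodicLift_add_mul, add_left_inj]
  rw [← Fin.val_natCast, periodicLift_val]

lemma isNextIndex_min'_filter {j : Fin N} (h : (I.filter (j < ·)).Nonempty) :
    IsNextIndex I j ((I.filter (j < ·)).min' h) := by
  obtain ⟨hmI, hjm⟩ := Finset.mem_filter.1 (Finset.min'_mem _ h)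
  refine ⟨hjm, by simpa using hmI, fun k hjk hkm hk => ?_⟩
  have hkN : ((k : Fin N) : ℕ) = k := Fin.val_cast_of_lt (hkm.trans (Fin.isLt _))
  have : (I.filter (j < ·)).min' h ≤ (k : Fin N) :=
    Finset.min'_le _ _ (Finset.mem_filter.2 ⟨hk, Fin.lt_def.2 (by rwa [hkN])⟩)
  rw [Fin.le_def] at this
  omega

lemma isNextIndex_min'_add (hI : I.Nonempty) {j : Fin N} (h : ¬ (I.filter (j < ·)).Nonempty) :
    IsNextIndex I j (I.min' hI + N) := by
  refine ⟨by omega, by simpa using I.min'_mem hI, fun k hjk hkm hk => ?_⟩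
  by_cases hkN : k < N
  · have hkN : ((k : Fin N) : ℕ) = k := Fin.val_cast_of_lt hkN
    exact h ⟨k, Finset.mem_filter.2 ⟨hk, Fin.lt_def.2 (by rwa [hkN])⟩⟩
  · obtain ⟨k, rfl⟩ : ∃ k', k = k' + N * 1 := ⟨k - N, by omega⟩
    rw [natCast_add_mul_self] at hk
    have hkN : ((k : Fin N) : ℕ) = k := Fin.val_cast_of_lt (by omega)
    have := Fin.le_def.1 (I.min'_le _ hk)
    omega

theorem maximalWrt_iff (η : Fin N → ℕ) (hI : I.Nonempty) :
    MaximalWrt η I ↔ ∀ j : Fin N, j ∉ I → η j ≠ periodicLift η (nextIndex I j) := by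
  refine (and_iff_right hI).trans (forall₂_congr fun j _ => ?_)
  split_ifs with h
  · rw [(isNextIndex_min'_filter h).nextIndex_eq, periodicLift_val]
  · rw [forall_prop_of_true hI, (isNextIndex_min'_add hI h).nextIndex_eq, periodicLift_add_self,
      periodicLift_val]

end PeriodicExtension

section Phi

variable {N : ℕ} [NeZero N]

lemma mem_phiSet (hN : 0 < N) (I : Finset (Fin N)) (j : Fin N) :
    j ∈ PhiSet hN I ↔ j + 1 ∈ I := by
  have hval : ((j + 1 : Fin N) : ℕ) = ((j : ℕ) + 1) % N := by
    rw [← Fin.val_natCast]; simp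
  simp only [PhiSet, Finset.mem_union, Finset.mem_image, Finset.mem_filter]
  rcases Nat.lt_or_eq_of_le j.isLt with h | h
  · rw [show j + 1 = ⟨j + 1, h⟩ from Fin.ext (by rw [hval, Nat.mod_eq_of_lt h])]
    constructor
    · rintro (⟨a, ⟨ha, ha0⟩, rfl⟩ | hmem)
      · convert ha using 1
        ext
        simp only
        omega
      · split_ifs at hmem <;> simp [Fin.ext_iff] at hmem
        omega
    · exact fun hmem => Or.inl ⟨_, ⟨hmem, by simp⟩, by simp⟩
  · replace h : (j : ℕ) + 1 = N := h
    rw [show j + 1 = ⟨0, hN⟩ from Fin.ext (by rw [hval, h, Nat.mod_self])]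
    constructor
    · rintro (⟨a, ⟨-, ha0⟩, rfl⟩ | hmem)
      · simp only at h
        omega
      · split_ifs at hmem with h0 <;> simp_all
    · intro h0
      simp only [if_pos h0, Finset.mem_singleton, Fin.ext_iff]
      omega

lemma phiSet_nonempty (hN : 0 < N) {I : Finset (Fin N)} (hI : I.Nonempty) :
    (PhiSet hN I).Nonempty :=
  let ⟨i, hi⟩ := hI
  ⟨i - 1, (mem_phiSet hN I _).2 (by rwa [sub_add_cancel])⟩

lemma phiComp_apply (η : Fin N → ℕ) (j : Fin N) : PhiComp η j = periodicLift η (j + 1) := by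
  unfold PhiComp
  split_ifs with h
  · exact (periodicLift_val η ⟨_, h⟩).symm
  · rw [show (j : ℕ) + 1 = 0 + N by omega, periodicLift_add_self]
    exact congrArg (· + 1) (periodicLift_val η ⟨0, _⟩).symm

lemma periodicLift_phiComp (η : Fin N → ℕ) (n : ℕ) :
    periodicLift (PhiComp η) n = periodicLift η (n + 1) := by
  rw [← Nat.mod_add_div n N, add_right_comm, periodicLift_add_mul, periodicLift_add_mul,
    ← Fin.val_natCast, periodicLift_val, phiComp_apply]

lemma IsNextIndex.of_phiSet (hN : 0 < N) {I : Finset (Fin N)} {n m : ℕ}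
    (h : IsNextIndex (PhiSet hN I) n m) : IsNextIndex I (n + 1) (m + 1) := by
  obtain ⟨hnm, hm, hgap⟩ := h
  refine ⟨by omega, by simpa [mem_phiSet] using hm, fun k hnk hkm hk => ?_⟩
  obtain ⟨k, rfl⟩ : ∃ k', k = k' + 1 := ⟨k - 1, by omega⟩
  exact hgap k (by omega) (by omega) (by simpa [mem_phiSet] using hk)

lemma nextIndex_phiSet (hN : 0 < N) {I : Finset (Fin N)} (hI : I.Nonempty) (n : ℕ) :
    nextIndex (PhiSet hN I) n + 1 = nextIndex I (n + 1) :=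
  ((isNextIndex_nextIndex (phiSet_nonempty hN hI) n).of_phiSet hN).nextIndex_eq.symm

end Phi

theorem stmt_7 (N : ℕ) (hN : 0 < N) (η : Fin N → ℕ) (I : Finset (Fin N))
    (hI : I.Nonempty) :
    MaximalWrt (PhiComp η) (PhiSet hN I) ↔ MaximalWrt η I := by
  have : NeZero N := NeZero.of_pos hN
  rw [maximalWrt_iff _ (phiSet_nonempty hN hI), maximalWrt_iff _ hI]
  refine (Equiv.addRight 1).forall_congr fun j => ?_
  rw [mem_phiSet, phiComp_apply, periodicLift_phiComp, nextIndex_phiSet hN hI, Ne, Ne,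
    periodicLift_eq_periodicLift_nextIndex_iff η hI]
  simp
end

section
/- Let η ∈ ℕ^N and define ν_I := c_I(η) for nonempty I ⊆ {1,...,N}, where with I = {t_1 < ... < t_s}: (c_I(η))_{t_j} = η_{t_{j+1}} for j < s, (c_I(η))_{t_s} = η_{t_1}+1, and (c_I(η))_i = η_i for i ∉ I. If I and I' are both maximal with respect to η (i.e. η_j ≠ η_{t_u} for t_{u−1} < j < t_u, u = 1,...,s with t_0 := 0, and η_j ≠ η_{t_1}+1 for t_s < j ≤ N) and c_I(η) = c_{I'}(η), then I = I'. -/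
/-- The composition `c_I(η)`. -/
def cI {N : ℕ} (η : Fin N → ℕ) (I : Finset (Fin N)) : Fin N → ℕ := fun i =>
  if hi : i ∈ I then
    if h : (I.filter fun j => i < j).Nonempty
    then η ((I.filter fun j => i < j).min' h)
    else η (I.min' ⟨i, hi⟩) + 1
  else η i

/-!
Off its last entry, `c_I(η)` is `η` composed with the cyclic successor permutation of `I`, and
its entry at `t_s` is `η_{t_1} + 1`. So `c_I(η)` is `η` with one entry `η_{t_1}` replaced by
`η_{t_1} + 1`, and `η_{t_1}` is the only value whose multiplicity drops from `η` to `c_I(η)`;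
hence `c_I(η) = c_{I'}(η)` forces `η_{t_1} = η_{t'_1}`. If `I ≠ I'`, let `m` be the largest
element of `I ∆ I'`, say `m ∈ I' \ I`. Above `m` the two sets agree, so `c_{I'}(η)_m` is exactly
the value that maximality of `I` forbids for `η_m`, whereas `c_I(η)_m = η_m`.
-/

open Finset
open scoped symmDiff

section CycSucc

variable {α : Type*} [LinearOrder α] {I : Finset α} {i j : α}

def cycSucc (I : Finset α) (i : α) : α :=
  if hi : i ∈ I then
    if h : (I.filter (i < ·)).Nonempty then (I.filter (i < ·)).min' h else I.min' ⟨i, hi⟩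
  else i

lemma cycSucc_of_notMem (hi : i ∉ I) : cycSucc I i = i := dif_neg hi

lemma cycSucc_of_filter_nonempty (hi : i ∈ I) (h : (I.filter (i < ·)).Nonempty) :
    cycSucc I i = (I.filter (i < ·)).min' h := by
  rw [cycSucc, dif_pos hi, dif_pos h]

lemma cycSucc_of_not_filter_nonempty (hi : i ∈ I) (h : ¬(I.filter (i < ·)).Nonempty) :
    cycSucc I i = I.min' ⟨i, hi⟩ := by
  rw [cycSucc, dif_pos hi, dif_neg h]

lemma not_filter_max'_lt_nonempty (hne : I.Nonempty) :
    ¬(I.filter (I.max' hne < ·)).Nonempty := fun ⟨j, hj⟩ =>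
  (I.le_max' j (mem_filter.1 hj).1).not_gt (mem_filter.1 hj).2

lemma cycSucc_max' (hne : I.Nonempty) : cycSucc I (I.max' hne) = I.min' hne :=
  cycSucc_of_not_filter_nonempty (I.max'_mem hne) (not_filter_max'_lt_nonempty hne)

lemma cycSucc_mem (hi : i ∈ I) : cycSucc I i ∈ I := by
  by_cases h : (I.filter (i < ·)).Nonempty
  · rw [cycSucc_of_filter_nonempty hi h]; exact mem_of_mem_filter _ (min'_mem _ h)
  · rw [cycSucc_of_not_filter_nonempty hi h]; exact min'_mem _ _

lemma cycSucc_ne_of_lt (hi : i ∈ I) (hj : j ∈ I) (hij : i < j) : cycSucc I i ≠ cycSucc I j := by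
  have hfi : (I.filter (i < ·)).Nonempty := ⟨j, mem_filter.2 ⟨hj, hij⟩⟩
  have hi_lt : i < cycSucc I i := by
    rw [cycSucc_of_filter_nonempty hi hfi]; exact (mem_filter.1 (min'_mem _ hfi)).2
  have hi_le : cycSucc I i ≤ j := by
    rw [cycSucc_of_filter_nonempty hi hfi]; exact min'_le _ j (mem_filter.2 ⟨hj, hij⟩)
  by_cases hfj : (I.filter (j < ·)).Nonempty
  · have : j < cycSucc I j := by
      rw [cycSucc_of_filter_nonempty hj hfj]; exact (mem_filter.1 (min'_mem _ hfj)).2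
    exact (hi_le.trans_lt this).ne
  · have : cycSucc I j ≤ i := by
      rw [cycSucc_of_not_filter_nonempty hj hfj]; exact min'_le _ i hi
    exact (this.trans_lt hi_lt).ne'

lemma cycSucc_injective (I : Finset α) : Function.Injective (cycSucc I) := by
  intro i j hij
  by_cases hi : i ∈ I <;> by_cases hj : j ∈ I
  · by_contra hne
    rcases lt_or_gt_of_ne hne with h | h
    · exact cycSucc_ne_of_lt hi hj h hij
    · exact cycSucc_ne_of_lt hj hi h hij.symm
  · exact absurd (cycSucc_of_notMem hj ▸ hij ▸ cycSucc_mem hi) hj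
  · exact absurd (cycSucc_of_notMem hi ▸ hij.symm ▸ cycSucc_mem hj) hi
  · rwa [cycSucc_of_notMem hi, cycSucc_of_notMem hj] at hij

lemma cycSucc_bijective [Finite α] (I : Finset α) : Function.Bijective (cycSucc I) :=
  Finite.injective_iff_bijective.1 (cycSucc_injective I)

end CycSucc

lemma exists_mem_symmDiff_filter_lt_eq {α : Type*} [LinearOrder α] {I I' : Finset α}
    (h : I ≠ I') : ∃ m ∈ I ∆ I', I.filter (m < ·) = I'.filter (m < ·) := by
  have hne : (I ∆ I').Nonempty := symmDiff_nonempty.2 h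
  refine ⟨_, max'_mem _ hne, ?_⟩
  ext j
  simp only [mem_filter]
  refine ⟨fun ⟨hj, hlt⟩ => ⟨?_, hlt⟩, fun ⟨hj, hlt⟩ => ⟨?_, hlt⟩⟩ <;> by_contra hj' <;>
    exact (le_max' _ j (mem_symmDiff.2 (by tauto))).not_gt hlt

section Composition

variable {N : ℕ} (η : Fin N → ℕ) {I I' : Finset (Fin N)} {i : Fin N}

lemma cI_of_notMem (hi : i ∉ I) : cI η I i = η i := dif_neg hi

lemma cI_of_ne_max' (hne : I.Nonempty) (hi : i ≠ I.max' hne) : cI η I i = η (cycSucc I i) := by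
  by_cases hiI : i ∈ I
  · have h : (I.filter (i < ·)).Nonempty :=
      ⟨I.max' hne, mem_filter.2 ⟨I.max'_mem hne, (I.le_max' i hiI).lt_of_ne hi⟩⟩
    rw [cI, dif_pos hiI, dif_pos h, cycSucc_of_filter_nonempty hiI h]
  · rw [cI_of_notMem η hiI, cycSucc_of_notMem hiI]

lemma cI_max' (hne : I.Nonempty) : cI η I (I.max' hne) = η (I.min' hne) + 1 := by
  rw [cI, dif_pos (I.max'_mem hne), dif_neg (not_filter_max'_lt_nonempty hne)]

lemma sum_comp_cI_add {M : Type*} [AddCommMonoid M] (f : ℕ → M) (hne : I.Nonempty) :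
    ∑ i, f (cI η I i) + f (η (I.min' hne)) = ∑ i, f (η i) + f (η (I.min' hne) + 1) := by
  set t := I.max' hne
  have hrest : ∑ i ∈ univ.erase t, f (cI η I i) = ∑ i ∈ univ.erase t, f (η (cycSucc I i)) :=
    sum_congr rfl fun i hi => by rw [cI_of_ne_max' η hne (ne_of_mem_erase hi)]
  have hperm : ∑ i, f (η (cycSucc I i)) = ∑ i, f (η i) :=
    (cycSucc_bijective I).sum_comp (f ∘ η)
  rw [← hperm, ← add_sum_erase _ _ (mem_univ t),
    ← add_sum_erase _ _ (mem_univ t), hrest, cI_max', cycSucc_max']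
  abel

lemma card_cI_eq_lt_card_iff (hne : I.Nonempty) (v : ℕ) :
    #{i | cI η I i = v} < #{i | η i = v} ↔ v = η (I.min' hne) := by
  have h := sum_comp_cI_add η (fun x => if x = v then 1 else 0) hne
  simp only [← card_filter] at h
  constructor
  · intro hlt
    by_contra hv
    simp only [Ne.symm hv, if_false] at h
    omega
  · rintro rfl
    simp only [if_true, Nat.succ_ne_self, if_false] at h
    omega

lemma min'_eq_of_cI_eq (hne : I.Nonempty) (hne' : I'.Nonempty) (hc : cI η I = cI η I') :
    η (I.min' hne) = η (I'.min' hne') :=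
  (card_cI_eq_lt_card_iff η hne' _).1 (hc ▸ (card_cI_eq_lt_card_iff η hne _).2 rfl)

lemma MaximalWrt.cI_ne {m : Fin N} (hI : MaximalWrt η I) (hmI : m ∉ I) (hmI' : m ∈ I')
    (hagree : I.filter (m < ·) = I'.filter (m < ·))
    (hval : η (I.min' hI.1) = η (I'.min' ⟨m, hmI'⟩)) : cI η I' m ≠ η m := by
  have hmax := hI.2 m hmI
  rw [cI, dif_pos hmI']
  rw [hagree] at hmax
  split_ifs at hmax ⊢ with hf
  · exact hmax.symm
  · exact hval ▸ (hmax hI.1).symm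

end Composition

theorem stmt_18 (N : ℕ) (η : Fin N → ℕ) (I I' : Finset (Fin N))
    (hI : MaximalWrt η I) (hI' : MaximalWrt η I') (hc : cI η I = cI η I') :
    I = I' := by
  by_contra hne
  have hval := min'_eq_of_cI_eq η hI.1 hI'.1 hc
  obtain ⟨m, hm, hagree⟩ := exists_mem_symmDiff_filter_lt_eq hne
  rcases mem_symmDiff.1 hm with ⟨hmI, hmI'⟩ | ⟨hmI', hmI⟩
  · exact hI'.cI_ne η hmI' hmI hagree.symm hval.symm (by rw [hc, cI_of_notMem η hmI'])
  · exact hI.cI_ne η hmI hmI' hagree hval (by rw [← hc, cI_of_notMem η hmI])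
end
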